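/- If real parameters satisfy 2|α| < ν, then for z = x + iy, I_n(z, z̄ | ξ) = 2^{-n} · ∑_{k=0}^{n} (-i)^k · C(n,k) · H^{ν-2α}_{n-k}(x - Re(ξ)/(ν-2α)) · H^{ν+2α}_{k}(y + Im(ξ)/(ν+2α)), where H^τ_m is the rescaled Hermite polynomial H^τ_m(t) = (-1)^m e^{τt²} (d/dt)^m e^{-τt²}. -/

import Mathlib

/-!
The rescaled Hermite functions obey `H_{m+1} = 2τt H_m - 2τm H_{m-1}`: apply the Leibniz rule to
`(e^{-τs²})' = -2τ s e^{-τs²}`. If `p` and `q` obey recurrences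
`p_{m+1} = A p_m - c m p_{m-1}` and `q_{m+1} = B q_m - d m q_{m-1}`, their binomial convolution
`∑ C(n,k) p_k q_{n-k}` obeys the same recurrence with `A + B` and `c + d` (Pascal's rule).
Weighting the `y`-factor by `(-i)^k` and shifting `x, y` by `Re ξ/(ν-2α)`, `Im ξ/(ν+2α)` makes
`A + B = 2(ν z̄ - 2αz - ξ)` and `c + d = -8α`, the recurrence of `2^n I_n`;
both sequences start at `1`.
-/

open Complex

noncomputable def Ic (ν α ξ z w : ℂ) : ℕ → ℂ
  | 0 => 1
  | 1 => ν * w - 2 * α * z - ξ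
  | (n + 2) => (ν * w - 2 * α * z - ξ) * Ic ν α ξ z w (n + 1)
      + 2 * α * (n + 1) * Ic ν α ξ z w n

noncomputable def Hresc (τ : ℝ) (m : ℕ) (t : ℝ) : ℝ :=
  (-1 : ℝ) ^ m * Real.exp (τ * t ^ 2) *
    iteratedDeriv m (fun s : ℝ => Real.exp (-τ * s ^ 2)) t

open Finset

section Recurrence

variable {R : Type*} [CommRing R]

/-- At `m = 0` the junk value `p (0 - 1) = p 0` is multiplied by `0`, so this includes
`p 1 = A * p 0`. -/
def ThreeTermRec (A c : R) (p : ℕ → R) : Prop :=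
  ∀ m : ℕ, p (m + 1) = A * p m - c * m * p (m - 1)

def binomConv (p q : ℕ → R) (n : ℕ) : R :=
  ∑ ij ∈ antidiagonal n, (n.choose ij.1 : R) * p ij.1 * q ij.2

section binomConv

variable (p q : ℕ → R)

theorem binomConv_comm : binomConv p q = binomConv q p := by
  funext n
  rw [binomConv, ← Nat.sum_antidiagonal_swap]
  refine sum_congr rfl fun ij hij => ?_
  rw [Prod.fst_swap, Prod.snd_swap, Nat.choose_symm_of_eq_add (mem_antidiagonal.1 hij).symm]
  ring

theorem binomConv_succ (n : ℕ) :
    binomConv p q (n + 1) =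
      binomConv (fun i => p (i + 1)) q n + binomConv p (fun j => q (j + 1)) n := by
  have h := sum_antidiagonal_choose_succ_mul (fun i j => p i * q j) n
  simp only [← mul_assoc] at h
  rw [binomConv, h, add_comm, binomConv, binomConv]
  congr 1
  refine sum_congr rfl fun ij hij => ?_
  rw [← Nat.choose_symm_of_eq_add (mem_antidiagonal.1 hij).symm]

theorem binomConv_natCast_mul_pred (n : ℕ) :
    binomConv (fun i => (i : R) * p (i - 1)) q n = n * binomConv p q (n - 1) := by
  rcases n with _ | n
  · simp [binomConv]
  · rw [binomConv, Nat.sum_antidiagonal_succ, binomConv, mul_sum]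
    simp only [Nat.cast_zero, zero_mul, mul_zero, zero_add, Nat.add_sub_cancel]
    refine sum_congr rfl fun ij _ => ?_
    have h := congrArg (Nat.cast (R := R)) (Nat.add_one_mul_choose_eq n ij.1)
    push_cast at h ⊢
    linear_combination (p ij.1 * q ij.2) * h.symm

end binomConv

namespace ThreeTermRec

variable {A B c d : R} {p q : ℕ → R}

theorem ext (hp : ThreeTermRec A c p) (hq : ThreeTermRec A c q) (h₀ : p 0 = q 0) : p = q := by
  suffices h : ∀ n, p n = q n ∧ p (n + 1) = q (n + 1) from funext fun n => (h n).1
  intro n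
  induction n with
  | zero => exact ⟨h₀, by rw [hp, hq, h₀]⟩
  | succ n ih => exact ⟨ih.2, by rw [hp, hq, Nat.add_sub_cancel, ih.1, ih.2]⟩

theorem pow_mul (hp : ThreeTermRec A c p) (u : R) :
    ThreeTermRec (u * A) (u ^ 2 * c) (fun n => u ^ n * p n) := by
  intro m
  rcases m with _ | m
  · simp [hp 0, mul_assoc]
  · simp only [hp (m + 1), Nat.add_sub_cancel]
    ring

theorem map {S : Type*} [CommRing S] (f : R →+* S) (hp : ThreeTermRec A c p) :
    ThreeTermRec (f A) (f c) (fun n => f (p n)) := by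
  intro m
  simp [hp m]

theorem binomConv_shift (hp : ThreeTermRec A c p) (q : ℕ → R) (n : ℕ) :
    binomConv (fun i => p (i + 1)) q n = A * binomConv p q n - c * n * binomConv p q (n - 1) := by
  calc binomConv (fun i => p (i + 1)) q n
      = A * binomConv p q n - c * binomConv (fun i => (i : R) * p (i - 1)) q n := by
        simp only [binomConv, mul_sum, ← sum_sub_distrib]
        exact sum_congr rfl fun _ _ => by rw [hp]; ring
    _ = A * binomConv p q n - c * n * binomConv p q (n - 1) := by
        rw [binomConv_natCast_mul_pred, mul_assoc]

theorem binomConv (hp : ThreeTermRec A c p) (hq : ThreeTermRec B d q) :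
    ThreeTermRec (A + B) (c + d) (binomConv p q) := by
  intro n
  rw [binomConv_succ, hp.binomConv_shift, binomConv_comm p (fun j => q (j + 1)),
    hq.binomConv_shift, binomConv_comm q p]
  ring

end ThreeTermRec

end Recurrence

theorem iteratedDeriv_fun_id_mul {𝕜 : Type*} [NontriviallyNormedField 𝕜] {f : 𝕜 → 𝕜}
    {m : ℕ} {t : 𝕜} (hf : ContDiffAt 𝕜 m f t) :
    iteratedDeriv m (fun s => s * f s) t =
      t * iteratedDeriv m f t + m * iteratedDeriv (m - 1) f t := by
  rw [iteratedDeriv_fun_mul (f := fun s => s) contDiffAt_fun_id hf, add_comm (t * _)]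
  rcases m with _ | m
  · simp
  · simp [sum_range_succ', iteratedDeriv_fun_id]

theorem deriv_gaussian (τ : ℝ) :
    deriv (fun s : ℝ => Real.exp (-τ * s ^ 2)) = fun s => -2 * τ * (s * Real.exp (-τ * s ^ 2)) := by
  funext s
  have h : HasDerivAt (fun s : ℝ => -τ * s ^ 2) (-τ * (2 * s)) s := by
    simpa using (hasDerivAt_pow 2 s).const_mul (-τ)
  rw [h.exp.deriv]
  ring

theorem iteratedDeriv_succ_gaussian (τ : ℝ) (m : ℕ) (t : ℝ) :
    iteratedDeriv (m + 1) (fun s : ℝ => Real.exp (-τ * s ^ 2)) t =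
      -2 * τ * (t * iteratedDeriv m (fun s : ℝ => Real.exp (-τ * s ^ 2)) t
        + m * iteratedDeriv (m - 1) (fun s : ℝ => Real.exp (-τ * s ^ 2)) t) := by
  rw [iteratedDeriv_succ', deriv_gaussian, iteratedDeriv_const_mul_field,
    iteratedDeriv_fun_id_mul (by fun_prop)]

theorem hresc_zero (τ t : ℝ) : Hresc τ 0 t = 1 := by
  simp [Hresc, ← Real.exp_add]

theorem threeTermRec_hresc (τ t : ℝ) :
    ThreeTermRec (2 * τ * t) (2 * τ) (fun m => Hresc τ m t) := by
  intro m
  simp only [Hresc]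
  rw [iteratedDeriv_succ_gaussian]
  rcases m with _ | m
  · ring
  · simp only [Nat.add_sub_cancel]
    push_cast
    ring

theorem threeTermRec_ic (ν α ξ z w : ℂ) :
    ThreeTermRec (ν * w - 2 * α * z - ξ) (-2 * α) (Ic ν α ξ z w) := by
  rintro (_ | _ | m)
  · simp [Ic]
  · simp [Ic]
  · simp only [Ic, Nat.add_sub_cancel]
    push_cast
    ring

theorem stmt7 (ν α : ℝ) (hνα : 2 * |α| < ν) (ξ z : ℂ) (n : ℕ) :
    Ic (ν : ℂ) (α : ℂ) ξ z (starRingEnd ℂ z) n =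
      (1 / 2 ^ n : ℂ) *
        ∑ k ∈ Finset.range (n + 1),
          (-Complex.I) ^ k * (n.choose k : ℂ) *
            ((Hresc (ν - 2 * α) (n - k) (z.re - ξ.re / (ν - 2 * α)) : ℝ) : ℂ) *
            ((Hresc (ν + 2 * α) k (z.im + ξ.im / (ν + 2 * α)) : ℝ) : ℂ) := by
  have ha : ν - 2 * α ≠ 0 := by linarith [le_abs_self α]
  have hb : ν + 2 * α ≠ 0 := by linarith [neg_abs_le α]
  set a := ν - 2 * α
  set b := ν + 2 * α
  set x := z.re - ξ.re / a
  set y := z.im + ξ.im / b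
  have hrec := (((threeTermRec_hresc b y).map ofRealHom).pow_mul (-I)).binomConv
    ((threeTermRec_hresc a x).map ofRealHom)
  have hA : -I * ofRealHom (2 * b * y) + ofRealHom (2 * a * x) =
      2 * ((ν : ℂ) * starRingEnd ℂ z - 2 * α * z - ξ) := by
    apply Complex.ext <;> simp [x, y] <;> field_simp <;> ring
  have hc : (-I) ^ 2 * ofRealHom (2 * b) + ofRealHom (2 * a) = 2 ^ 2 * (-2 * α) := by
    push_cast [ofRealHom_eq_coe, a, b]
    linear_combination (2 * ((ν : ℂ) + 2 * α)) * I_sq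
  rw [hA, hc] at hrec
  have h := congrFun (((threeTermRec_ic _ _ _ _ _).pow_mul 2).ext hrec
    (by simp [Ic, binomConv, hresc_zero])) n
  rw [binomConv, Nat.sum_antidiagonal_eq_sum_range_succ_mk] at h
  rw [one_div, eq_inv_mul_iff_mul_eq₀ (pow_ne_zero _ two_ne_zero), h]
  exact sum_congr rfl fun k _ => by simp only [ofRealHom_eq_coe]; ring
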